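/- arXiv:1712.04462 — 3 statements merged into one kernel-verified Lean document; each statement's English description precedes it below -/
import Mathlib

section
/- Let Ψ : ℝ^L → ℝ^N be a linear map between Euclidean spaces with adjoint Ψ† : ℝ^N → ℝ^L satisfying Ψ†Ψ = I (the identity on ℝ^L). Let g : ℝ^L → ℝ be convex, let λ > 0, and let z ∈ ℝ^N. If p ∈ ℝ^L is a global minimiser of u ↦ g(u) + ‖u − Ψ†z‖₂²/(2λ) over ℝ^L, then z + Ψ(p − Ψ†z) is a global minimiser of u ↦ g(Ψ†u) + ‖u − z‖₂²/(2λ) over ℝ^N. -/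
open ContinuousLinearMap

/-!
Write `A = Ψ†`. Since `Ψ†Ψ = I`, `Ψ` is an isometry, hence `‖A‖ = ‖Ψ‖ ≤ 1` and `A` is
`1`-Lipschitz. The candidate `q = z + Ψ (p - A z)` satisfies `A q = p` and
`‖q - z‖ = ‖p - A z‖`, so its objective value equals the minimum of the problem in `ℝ^L`,
while for every `u` the objective at `u` dominates the `ℝ^L`-objective at `A u`, because
`A` does not increase the distance to `z`.
-/

section ProxObjective

variable {X Y : Type*} [PseudoMetricSpace X] [PseudoMetricSpace Y]

/-- The function minimised by `prox_g^λ(x)`. -/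
noncomputable def proxObjective (g : X → ℝ) (lam : ℝ) (x u : X) : ℝ :=
  g u + dist u x ^ 2 / (2 * lam)

theorem proxObjective_le_proxObjective_comp {A : Y → X} (hA : LipschitzWith 1 A)
    (g : X → ℝ) {lam : ℝ} (hlam : 0 ≤ lam) (z u : Y) :
    proxObjective g lam (A z) (A u) ≤ proxObjective (g ∘ A) lam z u := by
  have hdist : dist (A u) (A z) ≤ dist u z := by
    simpa only [NNReal.coe_one, one_mul] using hA.dist_le_mul u z
  rw [proxObjective, proxObjective, Function.comp_apply]
  gcongr

theorem isMinOn_proxObjective_comp {A : Y → X} (hA : LipschitzWith 1 A)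
    {g : X → ℝ} {lam : ℝ} (hlam : 0 ≤ lam) {z : Y} {p : X}
    (hp : IsMinOn (proxObjective g lam (A z)) Set.univ p) {q : Y} (hq : A q = p)
    (hqz : dist q z = dist p (A z)) :
    IsMinOn (proxObjective (g ∘ A) lam z) Set.univ q := by
  intro u _
  calc proxObjective (g ∘ A) lam z q = proxObjective g lam (A z) p := by
        simp only [proxObjective, Function.comp_apply, hq, hqz]
    _ ≤ proxObjective g lam (A z) (A u) := hp (Set.mem_univ _)
    _ ≤ proxObjective (g ∘ A) lam z u := proxObjective_le_proxObjective_comp hA g hlam z u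

end ProxObjective

section AdjointCompSelf

variable {𝕜 H K : Type*} [RCLike 𝕜] [NormedAddCommGroup H] [InnerProductSpace 𝕜 H]
  [CompleteSpace H] [NormedAddCommGroup K] [InnerProductSpace 𝕜 K] [CompleteSpace K]
  {Ψ : H →L[𝕜] K}

theorem ContinuousLinearMap.norm_adjoint_le_one_of_adjoint_comp_self (h : adjoint Ψ ∘L Ψ = 1) :
    ‖adjoint Ψ‖ ≤ 1 := by
  rw [LinearIsometryEquiv.norm_map]
  exact Ψ.opNorm_le_bound zero_le_one fun x => by
    rw [(norm_map_iff_adjoint_comp_self Ψ).mpr h x, one_mul]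

theorem ContinuousLinearMap.lipschitzWith_one_adjoint_of_adjoint_comp_self
    (h : adjoint Ψ ∘L Ψ = 1) : LipschitzWith 1 (adjoint Ψ) :=
  (adjoint Ψ).lipschitz.weaken (norm_adjoint_le_one_of_adjoint_comp_self h)

end AdjointCompSelf

theorem analysis_prox_composition_general
    (L N : ℕ)
    (Ψ : EuclideanSpace ℝ (Fin L) →L[ℝ] EuclideanSpace ℝ (Fin N))
    (h : (adjoint Ψ).comp Ψ = ContinuousLinearMap.id ℝ (EuclideanSpace ℝ (Fin L)))
    (g : EuclideanSpace ℝ (Fin L) → ℝ)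
    (lam : ℝ) (hlam : 0 < lam)
    (z : EuclideanSpace ℝ (Fin N))
    (p : EuclideanSpace ℝ (Fin L))
    (hp : ∀ u : EuclideanSpace ℝ (Fin L),
      g p + ‖p - adjoint Ψ z‖ ^ 2 / (2 * lam) ≤
        g u + ‖u - adjoint Ψ z‖ ^ 2 / (2 * lam)) :
    ∀ u : EuclideanSpace ℝ (Fin N),
      g (adjoint Ψ (z + Ψ (p - adjoint Ψ z))) +
          ‖z + Ψ (p - adjoint Ψ z) - z‖ ^ 2 / (2 * lam) ≤
        g (adjoint Ψ u) + ‖u - z‖ ^ 2 / (2 * lam) := by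
  have hleft : ∀ x, adjoint Ψ (Ψ x) = x := fun x => congr($h x)
  have hiso : ∀ x, ‖Ψ x‖ = ‖x‖ := (norm_map_iff_adjoint_comp_self Ψ).mpr h
  have hq : adjoint Ψ (z + Ψ (p - adjoint Ψ z)) = p := by
    rw [map_add, hleft, add_sub_cancel]
  have hqz : dist (z + Ψ (p - adjoint Ψ z)) z = dist p (adjoint Ψ z) := by
    rw [dist_eq_norm, dist_eq_norm, add_sub_cancel_left, hiso]
  have hmin := isMinOn_proxObjective_comp (lipschitzWith_one_adjoint_of_adjoint_comp_self h)
    hlam.le (isMinOn_univ_iff.mpr fun u => by simpa only [proxObjective, dist_eq_norm] using hp u)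
    hq hqz
  intro u
  simpa only [proxObjective, Function.comp_apply, dist_eq_norm] using isMinOn_univ_iff.mp hmin u

/-- Composition rule underlying equation (35) of the paper: if `Ψ† Ψ = I` and `p`
minimises `u ↦ g u + ‖u - Ψ† z‖² / (2λ)` over `ℝ^L`, then `z + Ψ (p - Ψ† z)`
minimises `u ↦ g (Ψ† u) + ‖u - z‖² / (2λ)` over `ℝ^N`. -/
theorem analysis_prox_composition
    (L N : ℕ)
    (Ψ : EuclideanSpace ℝ (Fin L) →L[ℝ] EuclideanSpace ℝ (Fin N))
    (h : (adjoint Ψ).comp Ψ = ContinuousLinearMap.id ℝ (EuclideanSpace ℝ (Fin L)))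
    (g : EuclideanSpace ℝ (Fin L) → ℝ) (hg : ConvexOn ℝ Set.univ g)
    (lam : ℝ) (hlam : 0 < lam)
    (z : EuclideanSpace ℝ (Fin N))
    (p : EuclideanSpace ℝ (Fin L))
    (hp : ∀ u : EuclideanSpace ℝ (Fin L),
      g p + ‖p - adjoint Ψ z‖ ^ 2 / (2 * lam) ≤
        g u + ‖u - adjoint Ψ z‖ ^ 2 / (2 * lam)) :
    ∀ u : EuclideanSpace ℝ (Fin N),
      g (adjoint Ψ (z + Ψ (p - adjoint Ψ z))) +
          ‖z + Ψ (p - adjoint Ψ z) - z‖ ^ 2 / (2 * lam) ≤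
        g (adjoint Ψ u) + ‖u - z‖ ^ 2 / (2 * lam) :=
  analysis_prox_composition_general L N Ψ h g lam hlam z p hp
end

section
/- Let E be a Euclidean space, f : E → ℝ convex, g : E → ℝ convex and differentiable, and λ > 0. Then x* ∈ E is a global minimiser of f + g if and only if x* is a global minimiser of the function u ↦ f(u) + ‖u − (x* − λ∇g(x*))‖₂²/(2λ); equivalently, x* = prox_{λf}(x* − λ∇g(x*)). -/
/-!
For convex `f` and a convex `h` with gradient `w` at `x`, the point `x` minimises `f + h` exactly
when `f x ≤ f u + ⟪w, u - x⟫` for every `u`: necessity by differentiating `h` along the segment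
from `x` to `u`, on which `f` lies below its chord; sufficiency by the first-order lower bound
`h x + ⟪w, u - x⟫ ≤ h u`. The gradient of `u ↦ ‖u - (x - λ ∇g x)‖² / (2λ)` at `x` is `∇g x`,
so for `h = g` and for this quadratic the criterion is the same inequality.
-/

open Set AffineMap
open scoped RealInnerProductSpace

lemma HasDerivAt.nonneg_of_isMinOn_Icc {φ : ℝ → ℝ} {d a b : ℝ} (hab : a < b)
    (hφ : HasDerivAt φ d a) (hmin : IsMinOn φ (Icc a b) a) : 0 ≤ d := by
  have hcone : b - a ∈ posTangentConeAt (Icc a b) a :=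
    sub_mem_posTangentConeAt_of_segment_subset (segment_eq_Icc hab.le).subset
  have hslope := hmin.localize.hasFDerivWithinAt_nonneg hφ.hasFDerivAt.hasFDerivWithinAt hcone
  simp only [ContinuousLinearMap.toSpanSingleton_apply, smul_eq_mul] at hslope
  exact nonneg_of_mul_nonneg_right hslope (sub_pos.mpr hab)

section InnerProductSpace

variable {E : Type*} [NormedAddCommGroup E] [InnerProductSpace ℝ E]

lemma convexOn_univ_norm_sub_sq_div (y : E) {c : ℝ} (hc : 0 ≤ c) :
    ConvexOn ℝ univ (fun u => ‖u - y‖ ^ 2 / (2 * c)) := by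
  have hsq : ConvexOn ℝ univ (fun u => dist u y ^ 2) :=
    (convexOn_univ_dist y).pow (fun u _ => dist_nonneg) 2
  simpa [dist_eq_norm, div_eq_inv_mul] using hsq.smul (inv_nonneg.mpr (by positivity : 0 ≤ 2 * c))

variable [CompleteSpace E]

lemma hasGradientAt_norm_sub_sq_div (y x : E) (c : ℝ) :
    HasGradientAt (fun u => ‖u - y‖ ^ 2 / (2 * c)) (c⁻¹ • (x - y)) x := by
  have hd : HasFDerivAt (fun u => ‖u - y‖ ^ 2 / (2 * c))
      ((2 * c)⁻¹ • 2 • innerSL ℝ (x - y)) x := by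
    simpa [div_eq_mul_inv, mul_comm] using
      ((hasFDerivAt_id x).sub_const y).norm_sq.const_mul (2 * c)⁻¹
  convert hasFDerivAt_iff_hasGradientAt.mp hd
  rw [eq_comm, LinearIsometryEquiv.symm_apply_eq]
  ext v
  simp only [mul_inv_rev, map_sub, smul_apply, sub_apply, coe_innerSL_apply, nsmul_eq_mul,
    Nat.cast_ofNat, smul_eq_mul, map_smul, InnerProductSpace.toDual_apply_apply]
  ring

variable {f h : E → ℝ} {w x : E}

lemma HasGradientAt.hasDerivAt_comp_lineMap (hw : HasGradientAt h w x) (u : E) :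
    HasDerivAt (fun t : ℝ => h (lineMap x u t)) ⟪w, u - x⟫ 0 := by
  have hF : HasFDerivAt h (InnerProductSpace.toDual ℝ E w) (lineMap x u (0 : ℝ)) := by
    simpa using hasGradientAt_iff_hasFDerivAt.mp hw
  have hcomp := hF.comp_hasDerivAt (0 : ℝ) hasDerivAt_lineMap
  rw [InnerProductSpace.toDual_apply_apply] at hcomp
  exact hcomp

lemma ConvexOn.add_inner_le_of_hasGradientAt (hh : ConvexOn ℝ univ h) (hw : HasGradientAt h w x)
    (u : E) : h x + ⟪w, u - x⟫ ≤ h u := by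
  have hline : ConvexOn ℝ univ (h ∘ lineMap x u) := hh.comp_affineMap (lineMap x u)
  have hslope := hline.le_slope_of_hasDerivAt (mem_univ 0) (mem_univ 1) one_pos
    (hw.hasDerivAt_comp_lineMap u)
  simp only [slope_def_field, Function.comp_apply, lineMap_apply_one, lineMap_apply_zero,
    sub_zero, div_one] at hslope
  linarith

lemma ConvexOn.sub_le_inner_of_forall_add_le_add (hf : ConvexOn ℝ univ f)
    (hw : HasGradientAt h w x) (hmin : ∀ u, f x + h x ≤ f u + h u) (u : E) :
    f x - f u ≤ ⟪w, u - x⟫ := by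
  suffices 0 ≤ f u - f x + ⟪w, u - x⟫ by linarith
  have hderiv : HasDerivAt (fun t => t * (f u - f x) + h (lineMap x u t))
      (f u - f x + ⟪w, u - x⟫) 0 := by
    simpa using ((hasDerivAt_id (0 : ℝ)).mul_const (f u - f x)).fun_add
      (hw.hasDerivAt_comp_lineMap u)
  refine hderiv.nonneg_of_isMinOn_Icc one_pos fun t ht => ?_
  have hchord : f (lineMap x u t) ≤ (1 - t) * f x + t * f u := by
    simpa [lineMap_apply_module] using
      hf.2 (mem_univ x) (mem_univ u) (sub_nonneg.mpr ht.2) ht.1 (by ring)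
  have := hmin (lineMap x u t)
  simp only [mem_ofPred_eq, zero_mul, lineMap_apply_zero, zero_add]
  linarith

theorem ConvexOn.forall_add_le_add_iff_forall_le_add_inner (hf : ConvexOn ℝ univ f)
    (hh : ConvexOn ℝ univ h) (hw : HasGradientAt h w x) :
    (∀ u, f x + h x ≤ f u + h u) ↔ ∀ u, f x ≤ f u + ⟪w, u - x⟫ := by
  refine ⟨fun hmin u => ?_, fun hvar u => ?_⟩
  · linarith [hf.sub_le_inner_of_forall_add_le_add hw hmin u]
  · linarith [hvar u, hh.add_inner_le_of_hasGradientAt hw u]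

end InnerProductSpace

/-- The fixed-point equation (17) of the paper from which the forward–backward
iteration is derived: for convex `f` and convex differentiable `g` on a Euclidean
space, `x*` globally minimises `f + g` if and only if
`x* = prox_{λf}(x* - λ∇g(x*))`, i.e. `x*` globally minimises
`u ↦ f u + ‖u - (x* - λ∇g(x*))‖² / (2λ)`. -/
theorem forward_backward_fixed_point
    {E : Type*} [NormedAddCommGroup E] [InnerProductSpace ℝ E] [FiniteDimensional ℝ E]
    (f g : E → ℝ) (hf : ConvexOn ℝ Set.univ f) (hg : ConvexOn ℝ Set.univ g)
    (g' : E → E) (hg' : ∀ x, HasGradientAt g (g' x) x)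
    (lam : ℝ) (hlam : 0 < lam) (xstar : E) :
    (∀ u, f xstar + g xstar ≤ f u + g u) ↔
      (∀ u, f xstar + ‖xstar - (xstar - lam • g' xstar)‖ ^ 2 / (2 * lam) ≤
          f u + ‖u - (xstar - lam • g' xstar)‖ ^ 2 / (2 * lam)) := by
  have hprox_grad : HasGradientAt (fun u => ‖u - (xstar - lam • g' xstar)‖ ^ 2 / (2 * lam))
      (g' xstar) xstar := by
    simpa [hlam.ne'] using hasGradientAt_norm_sub_sq_div (xstar - lam • g' xstar) xstar lam
  rw [hf.forall_add_le_add_iff_forall_le_add_inner hg (hg' xstar),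
    hf.forall_add_le_add_iff_forall_le_add_inner (convexOn_univ_norm_sub_sq_div _ hlam.le)
      hprox_grad]
end

section
/- Let E be a Euclidean space, f : E → ℝ convex, and g : E → ℝ convex and differentiable with β-Lipschitz gradient for some β > 0 (i.e. ‖∇g(u) − ∇g(v)‖₂ ≤ β‖u − v‖₂ for all u, v). Fix x ∈ E and a step size λ with 0 < λ ≤ 1/β, and let x⁺ be a global minimiser of u ↦ f(u) + ‖u − (x − λ∇g(x))‖₂²/(2λ) (i.e. x⁺ = prox_{λf}(x − λ∇g(x)), one forward–backward step from x). Then f(x⁺) + g(x⁺) ≤ f(x) + g(x). -/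
/-!
Comparing the proximal point `x⁺` with `x` in its defining minimisation gives
`f x⁺ + ⟪∇g x, x⁺ - x⟫ + ‖x⁺ - x‖² / (2λ) ≤ f x`, while the descent lemma for the
`β`-smooth `g` gives `g x⁺ ≤ g x + ⟪∇g x, x⁺ - x⟫ + β/2 ‖x⁺ - x‖²`. Since `β ≤ 1/λ`,
adding the two inequalities yields the claim.
-/

open InnerProductSpace

section Smooth

variable {E : Type*} [NormedAddCommGroup E] [InnerProductSpace ℝ E] [CompleteSpace E]

theorem HasGradientAt.hasDerivAt_add_smul {g : E → ℝ} {g' x d : E} {t : ℝ}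
    (hg : HasGradientAt g g' (x + t • d)) :
    HasDerivAt (fun s : ℝ => g (x + s • d)) ⟪g', d⟫_ℝ t := by
  have hline : HasDerivAt (fun s : ℝ => x + s • d) d t := by
    simpa using ((hasDerivAt_id t).smul_const d).const_add x
  have h := hg.hasFDerivAt.comp_hasDerivAt t hline
  simp only [toDual_apply_apply] at h
  exact h

theorem le_add_inner_add_sq_of_lipschitz_gradient {g : E → ℝ} {g' : E → E} {β : ℝ}
    (hg : ∀ x, HasGradientAt g (g' x) x) (hlip : ∀ u v, ‖g' u - g' v‖ ≤ β * ‖u - v‖)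
    (x y : E) :
    g y ≤ g x + ⟪g' x, y - x⟫_ℝ + β / 2 * ‖y - x‖ ^ 2 := by
  set d := y - x
  -- `φ` is the gap between `g` and its quadratic upper model along the segment `[x, y]`.
  set φ : ℝ → ℝ := fun t => g (x + t • d) - t * ⟪g' x, d⟫_ℝ - β / 2 * t ^ 2 * ‖d‖ ^ 2
  have hφ : ∀ t, HasDerivAt φ (⟪g' (x + t • d), d⟫_ℝ - ⟪g' x, d⟫_ℝ - β * t * ‖d‖ ^ 2) t := by
    intro t
    have hquad := ((hasDerivAt_pow 2 t).const_mul (β / 2)).mul_const (‖d‖ ^ 2)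
    refine (((hg (x + t • d)).hasDerivAt_add_smul.sub
      ((hasDerivAt_id t).mul_const ⟪g' x, d⟫_ℝ)).sub hquad).congr_deriv ?_
    ring
  have hφ' : ∀ t ∈ interior (Set.Icc (0 : ℝ) 1), deriv φ t ≤ 0 := by
    intro t ht
    rw [interior_Icc] at ht
    have hgap : ‖g' (x + t • d) - g' x‖ ≤ β * (t * ‖d‖) := by
      simpa [norm_smul, abs_of_pos ht.1] using hlip (x + t • d) x
    calc deriv φ t = ⟪g' (x + t • d) - g' x, d⟫_ℝ - β * t * ‖d‖ ^ 2 := by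
          rw [(hφ t).deriv, inner_sub_left]
      _ ≤ ‖g' (x + t • d) - g' x‖ * ‖d‖ - β * t * ‖d‖ ^ 2 := by
          gcongr; exact real_inner_le_norm _ _
      _ ≤ 0 := by nlinarith [norm_nonneg d]
  have hanti : AntitoneOn φ (Set.Icc 0 1) :=
    antitoneOn_of_deriv_nonpos (convex_Icc 0 1)
      (fun t _ => (hφ t).continuousAt.continuousWithinAt)
      (fun t _ => (hφ t).differentiableAt.differentiableWithinAt) hφ'
  have hφ0 : φ 0 = g x := by simp [φ]
  have hφ1 : φ 1 = g y - ⟪g' x, y - x⟫_ℝ - β / 2 * ‖y - x‖ ^ 2 := by simp [φ, d]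
  linarith [hanti (Set.left_mem_Icc.2 zero_le_one) (Set.right_mem_Icc.2 zero_le_one)
    zero_le_one]

end Smooth

theorem le_of_isMinOn_prox_objective {E : Type*} [NormedAddCommGroup E]
    [InnerProductSpace ℝ E] {f : E → ℝ} {lam : ℝ} (hlam : 0 < lam) {x v p : E}
    (hp : IsMinOn (fun u => f u + ‖u - (x - lam • v)‖ ^ 2 / (2 * lam)) Set.univ p) :
    f p + ⟪v, p - x⟫_ℝ + ‖p - x‖ ^ 2 / (2 * lam) ≤ f x := by
  have hpx := isMinOn_univ_iff.1 hp x
  have hexpand : ‖p - (x - lam • v)‖ ^ 2 =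
      ‖p - x‖ ^ 2 + 2 * lam * ⟪v, p - x⟫_ℝ + ‖x - (x - lam • v)‖ ^ 2 := by
    rw [show p - (x - lam • v) = (p - x) + lam • v by abel, sub_sub_cancel,
      norm_add_sq_real, real_inner_smul_right, real_inner_comm]
    ring
  rw [hexpand, add_div, add_div] at hpx
  have hcancel : 2 * lam * ⟪v, p - x⟫_ℝ / (2 * lam) = ⟪v, p - x⟫_ℝ := by field_simp
  linarith

theorem forward_backward_descent_general
    {E : Type*} [NormedAddCommGroup E] [InnerProductSpace ℝ E] [FiniteDimensional ℝ E]
    (f g : E → ℝ)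
    (g' : E → E) (hg' : ∀ x, HasGradientAt g (g' x) x)
    (β : ℝ) (hβ : 0 < β)
    (hlip : ∀ u v, ‖g' u - g' v‖ ≤ β * ‖u - v‖)
    (lam : ℝ) (hlam0 : 0 < lam) (hlam : lam ≤ 1 / β)
    (x xp : E)
    (hxp : ∀ u, f xp + ‖xp - (x - lam • g' x)‖ ^ 2 / (2 * lam) ≤
        f u + ‖u - (x - lam • g' x)‖ ^ 2 / (2 * lam)) :
    f xp + g xp ≤ f x + g x := by
  have hprox := le_of_isMinOn_prox_objective hlam0 (isMinOn_univ_iff.2 hxp)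
  have hsmooth := le_add_inner_add_sq_of_lipschitz_gradient hg' hlip x xp
  have hstep : β / 2 * ‖xp - x‖ ^ 2 ≤ ‖xp - x‖ ^ 2 / (2 * lam) := by
    rw [le_div_iff₀ (by positivity)]
    have hβlam : β * lam ≤ 1 := by rwa [le_div_iff₀' hβ] at hlam
    nlinarith [sq_nonneg ‖xp - x‖]
  linarith

/-- Descent property of the forward–backward splitting iteration (equation 18 of the
paper, inequality 30 in the proof of Theorem 1): for convex `f`, convex differentiable
`g` with `β`-Lipschitz gradient, and step size `0 < λ ≤ 1/β`, one forward–backward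
step `x⁺ = prox_{λf}(x - λ∇g(x))` does not increase the total objective `f + g`. -/
theorem forward_backward_descent
    {E : Type*} [NormedAddCommGroup E] [InnerProductSpace ℝ E] [FiniteDimensional ℝ E]
    (f g : E → ℝ) (hf : ConvexOn ℝ Set.univ f) (hg : ConvexOn ℝ Set.univ g)
    (g' : E → E) (hg' : ∀ x, HasGradientAt g (g' x) x)
    (β : ℝ) (hβ : 0 < β)
    (hlip : ∀ u v, ‖g' u - g' v‖ ≤ β * ‖u - v‖)
    (lam : ℝ) (hlam0 : 0 < lam) (hlam : lam ≤ 1 / β)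
    (x xp : E)
    (hxp : ∀ u, f xp + ‖xp - (x - lam • g' x)‖ ^ 2 / (2 * lam) ≤
        f u + ‖u - (x - lam • g' x)‖ ^ 2 / (2 * lam)) :
    f xp + g xp ≤ f x + g x :=
  forward_backward_descent_general f g g' hg' β hβ hlip lam hlam0 hlam x xp hxp
end
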